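/- Let Δ ≥ 2 and let G be a connected infinite Δ-regular graph. Suppose there is a sequence V₀, V₁, V₂, … of finite subsets of V(G) such that (1) the union of all the Vᵢ equals V(G), and (2) for some fixed ε with 0 < ε < 1, for every i ≥ 1 and every v ∈ Vᵢ, the number of neighbors of v lying in V₀ ∪ V₁ ∪ ⋯ ∪ V_{i−1} is at least εΔ. Then every pair (q, r) with 0 < q < ε and r > (1−ε)q lies in the epidemic region Ω_G; that is, strategy A becomes epidemic in the contagion game (G, q, r). -/

import Mathlib

namespace Contagion

open scoped BigOperators

/-- The three strategies in the contagion game. -/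
inductive Strat
  | A | B | AB
deriving DecidableEq

/-- Pairwise payoff to a player using the first strategy against a neighbor
using the second strategy, in the contagion game with parameters `q, r`. -/
noncomputable def pairPayoff (q r : ℝ) : Strat → Strat → ℝ
  | .A, .A => 1 - q
  | .A, .B => 0
  | .A, .AB => 1 - q
  | .B, .A => 0
  | .B, .B => q
  | .B, .AB => q
  | .AB, .A => 1 - q - r
  | .AB, .B => q - r
  | .AB, .AB => max q (1 - q) - r

variable {V : Type*}

/-- Total payoff to vertex `v` for playing strategy `s` against profile `σ`. -/
noncomputable def totalPayoff (G : SimpleGraph V) (q r : ℝ) (σ : V → Strat)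
    (v : V) (s : Strat) : ℝ :=
  ∑ᶠ u ∈ G.neighborSet v, pairPayoff q r s (σ u)

/-- `s` is a best response of vertex `v` to the profile `σ`. -/
def IsBestResponse (G : SimpleGraph V) (q r : ℝ) (σ : V → Strat) (v : V) (s : Strat) : Prop :=
  ∀ s' : Strat, totalPayoff G q r σ v s' ≤ totalPayoff G q r σ v s

/-- Strategy `A` becomes epidemic in the contagion game `(G, q, r)`:
there are a finite initial set `S₀` (playing `A`, everybody else playing `B`) and a
sequence `α` of vertices in which every vertex appears at least once, such that updating
at step `n` the vertex `α n` to a best response makes every vertex eventually adopt `A`. -/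
def Epidemic (G : SimpleGraph V) (q r : ℝ) : Prop :=
  ∃ (S₀ : Set V) (α : ℕ → V) (σ : ℕ → V → Strat),
    S₀.Finite ∧
    Function.Surjective α ∧
    (∀ v ∈ S₀, σ 0 v = Strat.A) ∧
    (∀ v ∉ S₀, σ 0 v = Strat.B) ∧
    (∀ n, IsBestResponse G q r (σ n) (α n) (σ (n + 1) (α n))) ∧
    (∀ n v, v ≠ α n → σ (n + 1) v = σ n v) ∧
    (∀ v, ∃ n, σ n v = Strat.A)

/-- The epidemic region `Ω_G ⊆ ℝ²` of `G`. -/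
def epidemicRegion (G : SimpleGraph V) : Set (ℝ × ℝ) :=
  {p | 0 < p.1 ∧ p.1 < 1 ∧ 0 < p.2 ∧ Epidemic G p.1 p.2}

/-- `G` is `Δ`-regular: every vertex has exactly `Δ` neighbors. -/
def IsRegular (G : SimpleGraph V) (Δ : ℕ) : Prop :=
  ∀ v, (G.neighborSet v).ncard = Δ

/-- The number of neighbors of `v` lying in the set `S`. -/
noncomputable def degIn (G : SimpleGraph V) (v : V) (S : Set V) : ℕ :=
  (G.neighborSet v ∩ S).ncard

/-- `RT Δ`: the infinite rooted tree in which the root (the empty list) has `Δ - 1`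
children and every other vertex also has `Δ - 1` children (hence degree `Δ`). -/
def RT (Δ : ℕ) : SimpleGraph (List (Fin (Δ - 1))) :=
  SimpleGraph.fromRel (fun l l' => ∃ a : Fin (Δ - 1), l' = a :: l)

/-- `G` contains a subgraph isomorphic to `RT Δ`. -/
def HasRTCopy (Δ : ℕ) (G : SimpleGraph V) : Prop :=
  ∃ f : List (Fin (Δ - 1)) → V,
    Function.Injective f ∧ ∀ x y, (RT Δ).Adj x y → G.Adj (f x) (f y)

/-- The thick half line `HL_Δ` (for even `Δ`), columns indexed by `ℕ` starting with the
first column `0`; `(k, i)` and `(l, j)` are adjacent exactly when `|k - l| = 1`. -/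
def HL (Δ : ℕ) : SimpleGraph (ℕ × Fin (Δ / 2)) :=
  SimpleGraph.fromRel (fun x y => y.1 = x.1 + 1)

/-- The epidemic region of the infinite `Δ`-regular tree:
`{(q,r) : q,r > 0, r ≥ ((Δ-1)/Δ)q, q ≤ 1/Δ} ∪ {(q,r) : q,r > 0, 2q + Δr ≤ 1}`. -/
def treeRegion (Δ : ℕ) : Set (ℝ × ℝ) :=
  {p | 0 < p.1 ∧ 0 < p.2 ∧ ((Δ : ℝ) - 1) / Δ * p.1 ≤ p.2 ∧ p.1 ≤ 1 / Δ} ∪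
  {p | 0 < p.1 ∧ 0 < p.2 ∧ 2 * p.1 + Δ * p.2 ≤ 1}

/-- The epidemic region of the thick line `L_Δ`:
`{(q,r) : 0 < q ≤ 1/2, r ≥ q/2} ∪ {(q,r) : q,r > 0, r ≤ q/2, 2q + 2r ≤ 1}`. -/
def thickLineRegion : Set (ℝ × ℝ) :=
  {p | 0 < p.1 ∧ p.1 ≤ 1 / 2 ∧ p.1 / 2 ≤ p.2} ∪
  {p | 0 < p.1 ∧ 0 < p.2 ∧ p.2 ≤ p.1 / 2 ∧ 2 * p.1 + 2 * p.2 ≤ 1}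

/-- `(SAB, SB)` is a blocking structure for the contagion game `(G, q, r)`
on a `Δ`-regular graph `G`. -/
def IsBlockingStructure (G : SimpleGraph V) (Δ : ℕ) (q r : ℝ) (SAB SB : Set V) : Prop :=
  Disjoint SAB SB ∧ (SAB.Nonempty ∨ SB.Nonempty) ∧
  (∀ v ∈ SAB, r / q * Δ < (degIn G v SB : ℝ)) ∧
  ∀ v ∈ SB,
    (1 - q - r) * Δ < (1 - q) * (degIn G v SB : ℝ) + min q (1 - q) * (degIn G v SAB : ℝ) ∧
    (1 - q) * Δ < (degIn G v SB : ℝ) + q * (degIn G v SAB : ℝ)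

/-- The two strategies of the `A`-`B` coordination game. -/
inductive CStrat
  | A | B
deriving DecidableEq

/-- Pairwise payoff in the `A`-`B` coordination game `(G, q)`. -/
noncomputable def cPairPayoff (q : ℝ) : CStrat → CStrat → ℝ
  | .A, .A => 1 - q
  | .A, .B => 0
  | .B, .A => 0
  | .B, .B => q

/-- Total payoff to `v` for playing `s` against profile `σ` in the coordination game. -/
noncomputable def cTotalPayoff (G : SimpleGraph V) (q : ℝ) (σ : V → CStrat)
    (v : V) (s : CStrat) : ℝ :=
  ∑ᶠ u ∈ G.neighborSet v, cPairPayoff q s (σ u)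

/-- `s` is a best response of `v` to `σ` in the coordination game. -/
def CIsBestResponse (G : SimpleGraph V) (q : ℝ) (σ : V → CStrat) (v : V) (s : CStrat) : Prop :=
  ∀ s' : CStrat, cTotalPayoff G q σ v s' ≤ cTotalPayoff G q σ v s

/-- Strategy `A` becomes epidemic in the coordination game `(G, q)` starting from the
initial set `S₀`. -/
def CoordEpidemicFrom (G : SimpleGraph V) (q : ℝ) (S₀ : Set V) : Prop :=
  ∃ (α : ℕ → V) (σ : ℕ → V → CStrat),
    Function.Surjective α ∧
    (∀ v ∈ S₀, σ 0 v = CStrat.A) ∧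
    (∀ v ∉ S₀, σ 0 v = CStrat.B) ∧
    (∀ n, CIsBestResponse G q (σ n) (α n) (σ (n + 1) (α n))) ∧
    (∀ n v, v ≠ α n → σ (n + 1) v = σ n v) ∧
    (∀ v, ∃ n, σ n v = CStrat.A)

/-- Strategy `A` becomes epidemic in the coordination game `(G, q)`. -/
def CoordEpidemic (G : SimpleGraph V) (q : ℝ) : Prop :=
  ∃ S₀ : Set V, S₀.Finite ∧ CoordEpidemicFrom G q S₀

/-!
Start with `V₀` playing `A` and rank the vertices so that each has at least `εΔ` neighbours
in `V₀` or of smaller rank: a vertex outside `V₀` by the first `Vᵢ` containing it, a vertex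
of `V₀` after all of its neighbours. Updating the vertices one at a time in order of rank,
each of them sees at least `εΔ` neighbours playing `A` and the rest playing `B`. Then `A` beats
`B` because `q < ε`, and beats `AB` because the extra gain `q` on at most `(1 - ε)Δ` neighbours
playing `B` does not pay the bilingual cost `rΔ`.
-/

open Classical in
noncomputable def abProfile (S : Set V) (v : V) : Strat := if v ∈ S then .A else .B

section Payoffs

variable {G : SimpleGraph V} {v : V}

theorem degIn_mono (hfin : (G.neighborSet v).Finite) {S T : Set V} (h : S ⊆ T) :
    degIn G v S ≤ degIn G v T :=
  Set.ncard_le_ncard (Set.inter_subset_inter_right _ h) (hfin.inter_of_left T)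

theorem degIn_eq_ncard_of_subset {S : Set V} (h : G.neighborSet v ⊆ S) :
    degIn G v S = (G.neighborSet v).ncard := by
  rw [degIn, Set.inter_eq_self_of_subset_left h]

theorem degIn_add_degIn_compl (hfin : (G.neighborSet v).Finite) (S : Set V) :
    degIn G v S + degIn G v Sᶜ = (G.neighborSet v).ncard := by
  rw [degIn, degIn, ← Set.sdiff_eq, Set.ncard_inter_add_ncard_sdiff_eq_ncard _ _ hfin]

theorem totalPayoff_abProfile (hfin : (G.neighborSet v).Finite) (q r : ℝ) (S : Set V)
    (s : Strat) :
    totalPayoff G q r (abProfile S) v s =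
      degIn G v S * pairPayoff q r s .A + degIn G v Sᶜ * pairPayoff q r s .B := by
  have hconst : ∀ (T : Set V) (t : Strat), T.Finite → (∀ u ∈ T, abProfile S u = t) →
      ∑ᶠ u ∈ T, pairPayoff q r s (abProfile S u) = T.ncard * pairPayoff q r s t := by
    intro T t hT ht
    rw [finsum_mem_congr rfl fun u hu => congrArg (pairPayoff q r s) (ht u hu),
      finsum_mem_eq_finite_toFinset_sum _ hT, Finset.sum_const, nsmul_eq_mul,
      Set.ncard_eq_toFinset_card T hT]
  rw [totalPayoff, ← finsum_mem_inter_add_sdiff S hfin, Set.sdiff_eq, degIn, degIn,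
    hconst (G.neighborSet v ∩ S) .A (hfin.inter_of_left _) fun u hu => if_pos hu.2,
    hconst (G.neighborSet v ∩ Sᶜ) .B (hfin.inter_of_left _) fun u hu => if_neg hu.2]

theorem isBestResponse_abProfile_A (hfin : (G.neighborSet v).Finite) {q r ε : ℝ}
    (hq : 0 ≤ q) (hqε : q ≤ ε) (hr : (1 - ε) * q ≤ r) {S : Set V}
    (hS : ε * (G.neighborSet v).ncard ≤ degIn G v S) :
    IsBestResponse G q r (abProfile S) v .A := by
  have hsum : (degIn G v S : ℝ) + degIn G v Sᶜ = (G.neighborSet v).ncard := by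
    exact_mod_cast degIn_add_degIn_compl hfin S
  have hbq : (degIn G v Sᶜ : ℝ) * q ≤ (G.neighborSet v).ncard * r := by
    nlinarith [mul_le_mul_of_nonneg_left hr (Nat.cast_nonneg (G.neighborSet v).ncard)]
  intro s
  simp only [totalPayoff_abProfile hfin]
  cases s <;> simp only [pairPayoff]
  · exact le_rfl
  · nlinarith
  · linear_combination hbq - r * hsum

end Payoffs

theorem image_Iio_add_one {α : Type*} (f : ℕ → α) (n : ℕ) :
    f '' Set.Iio (n + 1) = insert (f n) (f '' Set.Iio n) := by
  rw [Set.Iio_add_one_eq_Iic, ← Set.Iio_insert, Set.image_insert_eq]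

section RankEnumeration

variable [Infinite V] (ρ : V → ℕ)

noncomputable def leastRankOutside (s : Finset V) : V :=
  Function.argminOn ρ (↑s)ᶜ s.finite_toSet.infinite_compl.nonempty

open Classical in
noncomputable def rankEnumPrefix : ℕ → Finset V
  | 0 => ∅
  | n + 1 => insert (leastRankOutside ρ (rankEnumPrefix n)) (rankEnumPrefix n)

noncomputable def rankEnum (n : ℕ) : V := leastRankOutside ρ (rankEnumPrefix ρ n)

theorem coe_rankEnumPrefix (n : ℕ) :
    (rankEnumPrefix ρ n : Set V) = rankEnum ρ '' Set.Iio n := by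
  classical
  induction n with
  | zero => simp [rankEnumPrefix]
  | succ n ih =>
    rw [rankEnumPrefix, Finset.coe_insert, ih, image_Iio_add_one]
    rfl

theorem rankEnum_notMem_image_Iio (n : ℕ) : rankEnum ρ n ∉ rankEnum ρ '' Set.Iio n := by
  rw [← coe_rankEnumPrefix]
  exact Function.argminOn_mem ρ _ (Finset.finite_toSet _).infinite_compl.nonempty

theorem rankEnum_le_of_notMem {n : ℕ} {w : V} (hw : w ∉ rankEnum ρ '' Set.Iio n) :
    ρ (rankEnum ρ n) ≤ ρ w := by
  rw [← coe_rankEnumPrefix] at hw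
  exact Function.argminOn_le ρ _ hw

theorem mem_image_Iio_of_lt_rankEnum {n : ℕ} {w : V} (hw : ρ w < ρ (rankEnum ρ n)) :
    w ∈ rankEnum ρ '' Set.Iio n := by
  by_contra h
  exact (rankEnum_le_of_notMem ρ h).not_gt hw

theorem rankEnum_injective : Function.Injective (rankEnum ρ) := by
  intro k n heq
  by_contra hne
  rcases Ne.lt_or_gt hne with hkn | hnk
  · exact rankEnum_notMem_image_Iio ρ n ⟨k, hkn, heq⟩
  · exact rankEnum_notMem_image_Iio ρ k ⟨n, hnk, heq.symm⟩

theorem rankEnum_surjective (hρ : ∀ i, {v | ρ v ≤ i}.Finite) :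
    Function.Surjective (rankEnum ρ) := by
  intro w
  by_contra hw
  have hbounded : ∀ n, ρ (rankEnum ρ n) ≤ ρ w := fun n =>
    rankEnum_le_of_notMem ρ fun ⟨k, _, hk⟩ => hw ⟨k, hk⟩
  exact Set.infinite_univ ((hρ (ρ w)).preimage (rankEnum_injective ρ).injOn |>.subset
    fun n _ => hbounded n)

end RankEnumeration

theorem epidemic_of_rank [Infinite V] {G : SimpleGraph V} (hfin : ∀ v, (G.neighborSet v).Finite)
    {q r ε : ℝ} (hq : 0 ≤ q) (hqε : q ≤ ε) (hr : (1 - ε) * q ≤ r)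
    {S₀ : Set V} (hS₀ : S₀.Finite) (ρ : V → ℕ) (hρ : ∀ i, {v | ρ v ≤ i}.Finite)
    (hdeg : ∀ v, ε * (G.neighborSet v).ncard ≤ degIn G v (S₀ ∪ {u | ρ u < ρ v})) :
    Epidemic G q r := by
  set α := rankEnum ρ
  have hα : Function.Surjective α := rankEnum_surjective ρ hρ
  have hA : ∀ n, abProfile (S₀ ∪ α '' Set.Iio (n + 1)) (α n) = .A := fun n =>
    if_pos (Or.inr ⟨n, Nat.lt_succ_self n, rfl⟩)
  refine ⟨S₀, α, fun n => abProfile (S₀ ∪ α '' Set.Iio n), hS₀, hα,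
    fun v hv => if_pos (Or.inl hv), fun v hv => if_neg (by simpa using hv), fun n => ?_,
    fun n v hv => ?_, fun v => ?_⟩
  · show IsBestResponse G q r _ (α n) (abProfile _ (α n))
    rw [hA]
    refine isBestResponse_abProfile_A (hfin _) hq hqε hr ((hdeg (α n)).trans ?_)
    exact_mod_cast degIn_mono (hfin _) (Set.union_subset_union_right S₀
      fun w hw => mem_image_Iio_of_lt_rankEnum ρ hw)
  · have hmem : v ∈ S₀ ∪ α '' Set.Iio (n + 1) ↔ v ∈ S₀ ∪ α '' Set.Iio n := by
      rw [image_Iio_add_one, Set.union_insert, Set.mem_insert_iff, or_iff_right hv]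
    simp only [abProfile]
    congr 1
    exact propext hmem
  · obtain ⟨n, rfl⟩ := hα v
    exact ⟨n + 1, hA n⟩

section CoverRank

variable {Vs : ℕ → Set V} (hcover : ∀ v, ∃ i, v ∈ Vs i)

open Classical in
noncomputable def coverLayer (v : V) : ℕ := Nat.find (hcover v)

open Classical in
theorem mem_coverLayer (v : V) : v ∈ Vs (coverLayer hcover v) := Nat.find_spec (hcover v)

open Classical in
theorem coverLayer_le {v : V} {i : ℕ} (hv : v ∈ Vs i) : coverLayer hcover v ≤ i :=
  Nat.find_min' (hcover v) hv

open Classical in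
noncomputable def coverRank (G : SimpleGraph V) (v : V) : ℕ :=
  if v ∈ Vs 0 then sSup (coverLayer hcover '' G.neighborSet v) + 1 else coverLayer hcover v

variable {G : SimpleGraph V}

theorem coverRank_of_notMem {v : V} (hv : v ∉ Vs 0) :
    coverRank hcover G v = coverLayer hcover v :=
  if_neg hv

theorem finite_setOf_coverRank_le (hfin : ∀ i, (Vs i).Finite) (i : ℕ) :
    {v | coverRank hcover G v ≤ i}.Finite := by
  refine ((Set.finite_le_nat i).biUnion fun j _ => hfin j).subset fun v hv => ?_
  by_cases hv0 : v ∈ Vs 0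
  · exact Set.mem_biUnion (Nat.zero_le i) hv0
  · rw [Set.mem_ofPred_eq, coverRank_of_notMem hcover hv0] at hv
    exact Set.mem_biUnion hv (mem_coverLayer hcover v)

theorem biUnion_lt_coverRank_subset (v : V) :
    ⋃ j < coverRank hcover G v, Vs j ⊆
      Vs 0 ∪ {u | coverRank hcover G u < coverRank hcover G v} := by
  intro u hu
  obtain ⟨j, hj, huj⟩ := Set.mem_iUnion₂.mp hu
  by_cases hu0 : u ∈ Vs 0
  · exact Or.inl hu0
  · right
    rw [Set.mem_ofPred_eq, coverRank_of_notMem hcover hu0]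
    exact (coverLayer_le hcover huj).trans_lt hj

theorem neighborSet_subset_of_mem_zero {v : V} (hfin : (G.neighborSet v).Finite)
    (hv : v ∈ Vs 0) :
    G.neighborSet v ⊆ Vs 0 ∪ {u | coverRank hcover G u < coverRank hcover G v} := by
  intro u hu
  by_cases hu0 : u ∈ Vs 0
  · exact Or.inl hu0
  · right
    rw [Set.mem_ofPred_eq, coverRank_of_notMem hcover hu0, coverRank, if_pos hv]
    exact Nat.lt_succ_of_le (le_csSup (hfin.image _).bddAbove ⟨u, hu, rfl⟩)

theorem le_degIn_coverRank (hfin : ∀ v, (G.neighborSet v).Finite) {ε : ℝ} (hε : ε ≤ 1)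
    (hdeg : ∀ i, 1 ≤ i → ∀ v ∈ Vs i,
      ε * (G.neighborSet v).ncard ≤ degIn G v (⋃ j < i, Vs j)) (v : V) :
    ε * (G.neighborSet v).ncard ≤
      degIn G v (Vs 0 ∪ {u | coverRank hcover G u < coverRank hcover G v}) := by
  by_cases hv0 : v ∈ Vs 0
  · rw [degIn_eq_ncard_of_subset (neighborSet_subset_of_mem_zero hcover (hfin v) hv0)]
    exact mul_le_of_le_one_left (Nat.cast_nonneg _) hε
  · have hlayer : 1 ≤ coverRank hcover G v := by
      rw [coverRank_of_notMem hcover hv0, Nat.one_le_iff_ne_zero]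
      intro h0
      exact hv0 (h0 ▸ mem_coverLayer hcover v)
    have hmem : v ∈ Vs (coverRank hcover G v) := by
      rw [coverRank_of_notMem hcover hv0]
      exact mem_coverLayer hcover v
    exact (hdeg _ hlayer v hmem).trans
      (by exact_mod_cast degIn_mono (hfin v) (biUnion_lt_coverRank_subset hcover v))

end CoverRank

theorem epidemic_of_growing_cover_general {V : Type*} (Δ : ℕ) (hΔ : 2 ≤ Δ) (G : SimpleGraph V)
    (hInf : Infinite V) (hReg : IsRegular G Δ)
    (Vs : ℕ → Set V) (hfin : ∀ i, (Vs i).Finite)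
    (hcover : (⋃ i, Vs i) = Set.univ)
    (ε : ℝ) (hε1 : ε < 1)
    (hdeg : ∀ i, 1 ≤ i → ∀ v ∈ Vs i, ε * Δ ≤ (degIn G v (⋃ j < i, Vs j) : ℝ)) :
    ∀ q r : ℝ, 0 < q → q < ε → (1 - ε) * q < r → (q, r) ∈ epidemicRegion G := by
  intro q r hq hqε hr
  have hfinN : ∀ v, (G.neighborSet v).Finite := fun v =>
    Set.finite_of_ncard_ne_zero (by rw [hReg v]; omega)
  have hcover' : ∀ v, ∃ i, v ∈ Vs i := Set.iUnion_eq_univ_iff.mp hcover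
  have hdeg' : ∀ i, 1 ≤ i → ∀ v ∈ Vs i,
      ε * (G.neighborSet v).ncard ≤ degIn G v (⋃ j < i, Vs j) := by
    intro i hi v hv
    rw [hReg v]
    exact hdeg i hi v hv
  refine ⟨hq, hqε.trans hε1, (mul_pos (sub_pos.mpr hε1) hq).trans hr, ?_⟩
  exact epidemic_of_rank hfinN hq.le hqε.le hr.le (hfin 0) _
    (finite_setOf_coverRank_le hcover' hfin) (le_degIn_coverRank hcover' hfinN hε1.le hdeg')

/-- If `G` is a connected infinite `Δ`-regular graph admitting a sequence of
finite vertex sets `V₀, V₁, …` covering `V(G)` such that every `v ∈ Vᵢ` (for `i ≥ 1`) has at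
least `εΔ` neighbors in `V₀ ∪ ⋯ ∪ V_{i-1}`, then every `(q, r)` with `0 < q < ε` and
`r > (1 - ε)q` lies in the epidemic region `Ω_G`. -/
theorem epidemic_of_growing_cover {V : Type*} (Δ : ℕ) (hΔ : 2 ≤ Δ) (G : SimpleGraph V)
    (hInf : Infinite V) (hConn : G.Connected) (hReg : IsRegular G Δ)
    (Vs : ℕ → Set V) (hfin : ∀ i, (Vs i).Finite)
    (hcover : (⋃ i, Vs i) = Set.univ)
    (ε : ℝ) (hε0 : 0 < ε) (hε1 : ε < 1)
    (hdeg : ∀ i, 1 ≤ i → ∀ v ∈ Vs i, ε * Δ ≤ (degIn G v (⋃ j < i, Vs j) : ℝ)) :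
    ∀ q r : ℝ, 0 < q → q < ε → (1 - ε) * q < r → (q, r) ∈ epidemicRegion G :=
  epidemic_of_growing_cover_general Δ hΔ G hInf hReg Vs hfin hcover ε hε1 hdeg

end Contagion
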